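/- arXiv:math/0311301 — 2 statements merged into one kernel-verified Lean document; each statement's English description precedes it below -/
import Mathlib

section
/- Let φ(z) = −r·log z + x·log(1+z/x) + 2r·log(1+√(1+z/x)) with 0 < r < x. There exists a constant c > 0 such that whenever r/x ≤ c, the equation φ'(z) = 0 has a solution z₀ satisfying |z₀ − r(1 + r/(2x) + r²/(8x²))| ≤ C·r·(r/x)³ for an absolute constant C. -/
open Real

/-! Substituting `u = √(1 + z/x)` turns `φ'(z) = 0` into `x (u² - 1) = r u`, i.e. `z = r u` with
`u² = (r/x) u + 1`. So the saddle point is explicit, `z₀ = r s(r/x)` with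
`s(t) = (t + √(t² + 4))/2`, and the expansion follows from
`2 + t²/4 - t⁴/64 ≤ √(t² + 4) ≤ 2 + t²/4`. -/

noncomputable section

/-- The phase function `φ` of (3.21). -/
def phase (r x w : ℝ) : ℝ :=
  -r * log w + x * log (1 + w / x) + 2 * r * log (1 + √(1 + w / x))

theorem hasDerivAt_phase {r x w : ℝ} (hx : 0 < x) (hw : 0 < w) :
    HasDerivAt (phase r x)
      (-r / w + x / (x + w) + r / (x * (√(1 + w / x) + (1 + w / x)))) w := by
  have hv : 0 < 1 + w / x := by positivity
  have hinner : HasDerivAt (fun w : ℝ => 1 + w / x) (1 / x) w := by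
    simpa using ((hasDerivAt_id w).div_const x).const_add 1
  have hsqrt : HasDerivAt (fun w : ℝ => 1 + √(1 + w / x))
      (1 / (2 * √(1 + w / x)) * (1 / x)) w :=
    ((hasDerivAt_sqrt hv.ne').comp w hinner).const_add 1
  have hsqrt_pos : 0 < √(1 + w / x) := sqrt_pos.mpr hv
  refine ((((hasDerivAt_log hw.ne').const_mul (-r)).add
    (((hasDerivAt_log hv.ne').comp w hinner).const_mul x)).add
    (((hasDerivAt_log (by positivity)).comp w hsqrt).const_mul (2 * r))).congr_deriv ?_
  have hsq : x * √(1 + w / x) ^ 2 = x + w := by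
    rw [sq_sqrt hv.le]
    field_simp
  generalize √(1 + w / x) = v at hsq hsqrt_pos ⊢
  field_simp
  linear_combination (-(r * w * (x + w))) * hsq

theorem phase_deriv_eq_zero {r x u : ℝ} (hr : 0 < r) (hx : 0 < x) (hu : 0 < u)
    (hquad : u ^ 2 = r / x * u + 1) : deriv (phase r x) (r * u) = 0 := by
  have hv : 1 + r * u / x = u ^ 2 := by
    rw [hquad]
    ring
  have hxu : x + r * u = x * u ^ 2 := by
    rw [← hv]
    field_simp
  rw [(hasDerivAt_phase hx (mul_pos hr hu)).deriv, hv, sqrt_sq hu.le, hxu]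
  field_simp
  linear_combination hxu

/-- The positive root of `s² = t s + 1`. -/
def saddleRatio (t : ℝ) : ℝ := (t + √(t ^ 2 + 4)) / 2

theorem saddleRatio_pos (t : ℝ) : 0 < saddleRatio t := by
  have : |t| < √(t ^ 2 + 4) := by
    rw [← sqrt_sq_eq_abs]
    exact sqrt_lt_sqrt (sq_nonneg t) (by linarith)
  unfold saddleRatio
  linarith [neg_abs_le t]

theorem saddleRatio_sq (t : ℝ) : saddleRatio t ^ 2 = t * saddleRatio t + 1 := by
  have : √(t ^ 2 + 4) ^ 2 = t ^ 2 + 4 := sq_sqrt (by positivity)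
  unfold saddleRatio
  linear_combination this / 4

theorem sqrt_four_add_sq_le (t : ℝ) : √(t ^ 2 + 4) ≤ 2 + t ^ 2 / 4 := by
  rw [sqrt_le_left (by positivity)]
  nlinarith [sq_nonneg (t ^ 2)]

theorem le_sqrt_four_add_sq {t : ℝ} (ht : t ^ 2 ≤ 32) :
    2 + t ^ 2 / 4 - t ^ 4 / 64 ≤ √(t ^ 2 + 4) := by
  apply le_sqrt_of_sq_le
  nlinarith [mul_nonneg (pow_nonneg (sq_nonneg t) 3) (sub_nonneg.mpr ht)]

theorem abs_saddleRatio_sub_le {t : ℝ} (ht : t ^ 2 ≤ 32) :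
    |saddleRatio t - (1 + t / 2 + t ^ 2 / 8)| ≤ t ^ 4 / 128 := by
  have hup := sqrt_four_add_sq_le t
  have hlow := le_sqrt_four_add_sq ht
  unfold saddleRatio
  rw [abs_le]
  constructor <;> nlinarith [pow_nonneg (sq_nonneg t) 2]

end

/-- The saddle point expansion (3.24): there are constants `c, C > 0` such that whenever
`0 < r < x` and `r/x ≤ c`, the equation `φ'(z₀) = 0` has a solution `z₀ > 0` with
`|z₀ - r(1 + r/(2x) + r²/(8x²))| ≤ C r (r/x)³`. -/
theorem stmt_5 :
    ∃ c > (0 : ℝ), ∃ C > (0 : ℝ), ∀ r x : ℝ, 0 < r → r < x → r / x ≤ c →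
      ∃ z₀ > (0 : ℝ),
        deriv (fun w => -r * Real.log w + x * Real.log (1 + w / x)
          + 2 * r * Real.log (1 + Real.sqrt (1 + w / x))) z₀ = 0 ∧
        |z₀ - r * (1 + r / (2 * x) + r ^ 2 / (8 * x ^ 2))| ≤ C * r * (r / x) ^ 3 := by
  refine ⟨1, one_pos, 1, one_pos, fun r x hr hrx _ => ?_⟩
  have hx : 0 < x := hr.trans hrx
  set t := r / x with ht
  have ht0 : 0 ≤ t := by positivity
  have ht1 : t ≤ 1 := (div_le_one hx).mpr hrx.le
  have hs := saddleRatio_pos t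
  refine ⟨r * saddleRatio t, mul_pos hr hs,
    phase_deriv_eq_zero hr hx hs (saddleRatio_sq t), ?_⟩
  have hexpand : r * saddleRatio t - r * (1 + r / (2 * x) + r ^ 2 / (8 * x ^ 2))
      = r * (saddleRatio t - (1 + t / 2 + t ^ 2 / 8)) := by
    rw [ht]
    ring
  have happrox := abs_saddleRatio_sub_le (t := t) (by nlinarith)
  rw [hexpand, abs_mul, abs_of_pos hr, one_mul, mul_le_mul_iff_right₀ hr]
  calc _ ≤ t ^ 4 / 128 := happrox
    _ ≤ t ^ 3 := by nlinarith [pow_nonneg ht0 3]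
end

section
/- Let Y ≥ 2, s = σ+it with σ > 1/2, and suppose E : [Y,∞) → ℝ is continuous with ∫_1^X E(x)² dx ≤ A·X·(log X)^B for all X ≥ 2 (mean square bound). Let w : [Y,∞) → ℝ be C¹ with |w'(x)| ≤ 1/x and |w(x)| ≤ 1. Then the integral ∫_Y^∞ E(x)(w'(x)x^{−s} − s·w(x)x^{−s−1})dx converges absolutely and is ≪ (1+|s|)·Y^{1/2−σ}·(log Y)^{C} for some constant C depending on B. -/
open MeasureTheory Complex Real

/-!
By AM-GM, `|E(x)| x^(-σ-1) ≤ x^(-σ-1/2) + E(x)² x^(-σ-3/2)`, and `(1 + |s|) |E(x)| x^(-σ-1)`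
dominates the integrand. The first term integrates over `[Y, ∞)` to `Y^(1/2-σ)/(σ-1/2)`.
For the second, `(log X)^B ≪ X^(1/2)` turns the mean square bound into `∫_Y^u E² ≪ u^(3/2)`,
and partial summation then gives `∫_Y^∞ E² x^(-σ-3/2) ≪ Y^(-σ)`. Hence one may take
`C = 0`.
-/

lemma exists_log_rpow_le_mul_sqrt (B : ℝ) :
    ∃ M > (0 : ℝ), ∀ u ≥ (2 : ℝ), Real.log u ^ B ≤ M * u ^ (1 / 2 : ℝ) := by
  have hlog2 : 0 < Real.log 2 := Real.log_pos one_lt_two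
  refine ⟨max (Real.log 2 ^ B) ((2 * B) ^ B), lt_max_of_lt_left (rpow_pos_of_pos hlog2 B),
    fun u hu => ?_⟩
  have hu0 : 0 < u := by linarith
  have hlogu : 0 < Real.log u := Real.log_pos (by linarith)
  rcases le_or_gt B 0 with hB | hB
  · calc Real.log u ^ B ≤ Real.log 2 ^ B :=
          rpow_le_rpow_of_nonpos hlog2 (Real.log_le_log two_pos hu) hB
      _ ≤ max (Real.log 2 ^ B) ((2 * B) ^ B) * u ^ (1 / 2 : ℝ) :=
          (le_max_left _ _).trans <| le_mul_of_one_le_right (by positivity)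
            (one_le_rpow (by linarith) (by norm_num))
  · have hlog : Real.log u ≤ 2 * B * u ^ (1 / (2 * B)) := by
      calc Real.log u ≤ u ^ (1 / (2 * B)) / (1 / (2 * B)) :=
            Real.log_le_rpow_div hu0.le (by positivity)
        _ = 2 * B * u ^ (1 / (2 * B)) := by field_simp
    calc Real.log u ^ B ≤ (2 * B * u ^ (1 / (2 * B))) ^ B := by gcongr
      _ = (2 * B) ^ B * u ^ (1 / 2 : ℝ) := by
          rw [mul_rpow (by positivity) (by positivity), ← rpow_mul hu0.le]
          field_simp
      _ ≤ max (Real.log 2 ^ B) ((2 * B) ^ B) * u ^ (1 / 2 : ℝ) := by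
          gcongr; exact le_max_right _ _

lemma abs_mul_rpow_le {x : ℝ} (hx : 0 < x) (e a : ℝ) :
    |e| * x ^ a ≤ x ^ (a + 1 / 2) + e ^ 2 * x ^ (a - 1 / 2) := by
  have hsqrt : x ^ (1 / 2 : ℝ) * x ^ (1 / 2 : ℝ) = x := by
    rw [← rpow_add hx]; norm_num
  have hsplit : ∀ c : ℝ, x ^ (a - 1 / 2 + c) = x ^ c * x ^ (a - 1 / 2) := fun c => by
    rw [rpow_add hx, mul_comm]
  have hamgm : |e| * x ^ (1 / 2 : ℝ) ≤ x + e ^ 2 := by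
    nlinarith [sq_nonneg (|e| - x ^ (1 / 2 : ℝ)), sq_abs e]
  calc |e| * x ^ a = |e| * x ^ (1 / 2 : ℝ) * x ^ (a - 1 / 2) := by
        rw [mul_assoc, ← hsplit, sub_add_cancel]
    _ ≤ (x + e ^ 2) * x ^ (a - 1 / 2) := by gcongr
    _ = x ^ (a + 1 / 2) + e ^ 2 * x ^ (a - 1 / 2) := by
        rw [show a + 1 / 2 = a - 1 / 2 + 1 by ring, hsplit, rpow_one]; ring

lemma intervalIntegral_rpow_le {r Y T : ℝ} (hr : r < -1) (hY : 0 < Y) (hYT : Y ≤ T) :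
    ∫ x in Y..T, x ^ r ≤ Y ^ (r + 1) / -(r + 1) := by
  have h0 : (0 : ℝ) ∉ Set.uIcc Y T := by
    rw [Set.uIcc_of_le hYT]; exact fun h => h.1.not_gt hY
  rw [integral_rpow (Or.inr ⟨hr.ne, h0⟩), ← neg_div_neg_eq]
  apply div_le_div_of_nonneg_right _ (by linarith)
  linarith [rpow_nonneg (hY.trans_le hYT).le (r + 1)]

lemma intervalIntegral_mul_rpow_neg_le {f : ℝ → ℝ} {Y D p q T : ℝ} (hf : Continuous f)
    (hY : 0 < Y) (hq : 0 ≤ q) (hpq : p < q) (hD : 0 ≤ D)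
    (hF : ∀ u ≥ Y, ∫ x in Y..u, f x ≤ D * u ^ p) (hT : Y ≤ T) :
    ∫ x in Y..T, f x * x ^ (-q) ≤ D * (1 + q / (q - p)) * Y ^ (p - q) := by
  set G : ℝ → ℝ := fun u => ∫ x in Y..u, f x
  have hpos : ∀ x ∈ Set.uIcc Y T, 0 < x := by
    rw [Set.uIcc_of_le hT]; exact fun x hx => hY.trans_le hx.1
  have hGderiv : ∀ x, HasDerivAt G (f x) x := fun x =>
    intervalIntegral.integral_hasDerivAt_right (hf.intervalIntegrable Y x)
      (hf.stronglyMeasurableAtFilter _ _) hf.continuousAt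
  have hpow : ∀ x ∈ Set.uIcc Y T, HasDerivAt (fun y => y ^ (-q)) (-q * x ^ (-q - 1)) x :=
    fun x hx => hasDerivAt_rpow_const (Or.inl (hpos x hx).ne')
  have hrpow : ∀ r : ℝ, ContinuousOn (fun x => x ^ r) (Set.uIcc Y T) := fun r x hx =>
    (continuousAt_rpow_const x r (Or.inl (hpos x hx).ne')).continuousWithinAt
  have hpow' : IntervalIntegrable (fun x => -q * x ^ (-q - 1)) volume Y T :=
    (continuousOn_const.mul (hrpow _)).intervalIntegrable
  have hibp := intervalIntegral.integral_mul_deriv_eq_deriv_mul hpow (fun x _ => hGderiv x)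
    hpow' (hf.intervalIntegrable Y T)
  have hboundary : T ^ (-q) * G T ≤ D * Y ^ (p - q) := calc
    T ^ (-q) * G T ≤ T ^ (-q) * (D * T ^ p) :=
        mul_le_mul_of_nonneg_left (hF T hT) (rpow_nonneg (hY.trans_le hT).le _)
    _ = D * T ^ (p - q) := by rw [sub_eq_add_neg, rpow_add (hY.trans_le hT)]; ring
    _ ≤ D * Y ^ (p - q) :=
        mul_le_mul_of_nonneg_left (rpow_le_rpow_of_nonpos hY hT (sub_nonpos.2 hpq.le)) hD
  have hbulk : ∫ x in Y..T, q * x ^ (-q - 1) * G x ≤ D * (q / (q - p)) * Y ^ (p - q) := calc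
    ∫ x in Y..T, q * x ^ (-q - 1) * G x ≤ ∫ x in Y..T, q * D * x ^ (p - q - 1) := by
        apply intervalIntegral.integral_mono_on hT
        · exact (continuousOn_const.mul (hrpow _)).mul
            (continuous_iff_continuousAt.2 fun x => (hGderiv x).continuousAt).continuousOn
            |>.intervalIntegrable
        · exact (continuousOn_const.mul (hrpow _)).intervalIntegrable
        intro x hx
        have hx0 : 0 < x := hY.trans_le hx.1
        calc q * x ^ (-q - 1) * G x ≤ q * x ^ (-q - 1) * (D * x ^ p) :=
              mul_le_mul_of_nonneg_left (hF x hx.1) (by positivity)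
          _ = q * D * x ^ (p - q - 1) := by
              rw [show p - q - 1 = -q - 1 + p by ring, rpow_add hx0]; ring
    _ = q * D * ∫ x in Y..T, x ^ (p - q - 1) := intervalIntegral.integral_const_mul _ _
    _ ≤ q * D * (Y ^ (p - q - 1 + 1) / -(p - q - 1 + 1)) := by
        gcongr
        exact intervalIntegral_rpow_le (r := p - q - 1) (by linarith) hY hT
    _ = D * (q / (q - p)) * Y ^ (p - q) := by ring_nf
  have hneg :
      ∫ x in Y..T, -q * x ^ (-q - 1) * G x = -∫ x in Y..T, q * x ^ (-q - 1) * G x := by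
    simp only [neg_mul, intervalIntegral.integral_neg]
  simp only [mul_comm (f _)]
  rw [hibp, hneg, show G Y = 0 from intervalIntegral.integral_same]
  linarith [show D * (1 + q / (q - p)) * Y ^ (p - q)
    = D * Y ^ (p - q) + D * (q / (q - p)) * Y ^ (p - q) by ring]

lemma integrableOn_Ici_and_norm_integral_le {E : Type*} [NormedAddCommGroup E]
    [NormedSpace ℝ E] {F : ℝ → E} {Y R : ℝ} (hF : ContinuousOn F (Set.Ici Y))
    (hR : ∀ T ≥ Y, ∫ x in Y..T, ‖F x‖ ≤ R) :
    IntegrableOn F (Set.Ici Y) ∧ ‖∫ x in Set.Ici Y, F x‖ ≤ R := by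
  have hloc : ∀ T, IntegrableOn F (Set.Ioc Y T) := fun T =>
    (hF.mono Set.Icc_subset_Ici_self).integrableOn_Icc.mono_set Set.Ioc_subset_Icc_self
  have hR' : ∀ᶠ T in Filter.atTop, ∫ x in Y..T, ‖F x‖ ≤ R :=
    Filter.eventually_atTop.2 ⟨Y, hR⟩
  have hIoi : IntegrableOn F (Set.Ioi Y) :=
    integrableOn_Ioi_of_intervalIntegral_norm_bounded R Y hloc Filter.tendsto_id hR'
  refine ⟨(integrableOn_Ici_iff_integrableOn_Ioi).mpr hIoi, ?_⟩
  rw [integral_Ici_eq_integral_Ioi]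
  exact (norm_integral_le_integral_norm _).trans <|
    le_of_tendsto (intervalIntegral_tendsto_integral_Ioi Y hIoi.norm Filter.tendsto_id) hR'

lemma intervalIntegral_sq_le_of_integral_Icc_sq_le {E : ℝ → ℝ} {A B M Y : ℝ}
    (hE : Continuous E) (hA : 0 ≤ A)
    (hM : ∀ u ≥ (2 : ℝ), Real.log u ^ B ≤ M * u ^ (1 / 2 : ℝ))
    (hmean : ∀ X ≥ (2 : ℝ), ∫ x in Set.Icc 1 X, E x ^ 2 ≤ A * X * Real.log X ^ B)
    (hY : 2 ≤ Y) :
    ∀ u ≥ Y, ∫ x in Y..u, E x ^ 2 ≤ A * M * u ^ (3 / 2 : ℝ) := by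
  intro u hu
  have hu2 : 2 ≤ u := hY.trans hu
  have hu0 : 0 < u := by linarith
  calc ∫ x in Y..u, E x ^ 2 = ∫ x in Set.Ioc Y u, E x ^ 2 :=
        intervalIntegral.integral_of_le hu
    _ ≤ ∫ x in Set.Icc 1 u, E x ^ 2 :=
        setIntegral_mono_set (hE.pow 2).integrableOn_Icc (ae_of_all _ fun x => sq_nonneg (E x))
          (Set.Ioc_subset_Icc_self.trans (Set.Icc_subset_Icc_left (by linarith))).eventuallyLE
    _ ≤ A * u * Real.log u ^ B := hmean u hu2
    _ ≤ A * u * (M * u ^ (1 / 2 : ℝ)) := by gcongr; exact hM u hu2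
    _ = A * M * u ^ (3 / 2 : ℝ) := by
        rw [show (3 / 2 : ℝ) = 1 + 1 / 2 by norm_num, rpow_add hu0, rpow_one]; ring

lemma norm_ofReal_mul_cpow_sub_le {x a b : ℝ} (hx : 0 < x) (ha : |a| ≤ 1 / x) (hb : |b| ≤ 1)
    (s : ℂ) :
    ‖(a : ℂ) * (x : ℂ) ^ (-s) - s * b * (x : ℂ) ^ (-s - 1)‖
      ≤ (1 + ‖s‖) * x ^ (-s.re - 1) := by
  have hx1 : x ^ (-s.re - 1) = 1 / x * x ^ (-s.re) := by
    rw [sub_eq_add_neg, rpow_add hx, rpow_neg_one]; ring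
  calc _ ≤ ‖(a : ℂ) * (x : ℂ) ^ (-s)‖ + ‖s * b * (x : ℂ) ^ (-s - 1)‖ :=
        norm_sub_le _ _
    _ = |a| * x ^ (-s.re) + ‖s‖ * |b| * x ^ (-s.re - 1) := by
        simp [norm_cpow_eq_rpow_re_of_pos hx]
    _ ≤ 1 / x * x ^ (-s.re) + ‖s‖ * 1 * x ^ (-s.re - 1) := by gcongr
    _ = (1 + ‖s‖) * x ^ (-s.re - 1) := by rw [hx1]; ring

/-- The integrand `E(x) · d/dx (w(x) x^{-s})` of `Z₆₂(s)`. -/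
noncomputable def z62Integrand (E w : ℝ → ℝ) (s : ℂ) (x : ℝ) : ℂ :=
  (E x : ℂ) *
    (Complex.ofReal (deriv w x) * (x : ℂ) ^ (-s) - s * (w x : ℂ) * (x : ℂ) ^ (-s - 1))

lemma continuousOn_z62Integrand {E w : ℝ → ℝ} (s : ℂ) {Y : ℝ} (hY : 0 < Y)
    (hE : Continuous E) (hw : ContDiff ℝ 1 w) :
    ContinuousOn (z62Integrand E w s) (Set.Ici Y) := by
  have hw' : Continuous (deriv w) := hw.continuous_deriv le_rfl
  intro x hx
  have hcpow : ∀ c : ℂ, ContinuousAt (fun y : ℝ => (y : ℂ) ^ c) x := fun c =>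
    continuousAt_ofReal_cpow_const x c (Or.inr (hY.trans_le hx).ne')
  have hofReal : ∀ {f : ℝ → ℝ}, Continuous f → ContinuousAt (fun y => (f y : ℂ)) x :=
    fun hf => (continuous_ofReal.comp hf).continuousAt
  exact ((hofReal hE).mul (((hofReal hw').mul (hcpow _)).sub
    ((continuousAt_const.mul (hofReal hw.continuous)).mul (hcpow _)))).continuousWithinAt

lemma norm_z62Integrand_le {E w : ℝ → ℝ} {s : ℂ} {x : ℝ} (hx : 0 < x)
    (hw' : |deriv w x| ≤ 1 / x) (hw : |w x| ≤ 1) :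
    ‖z62Integrand E w s x‖
      ≤ (1 + ‖s‖) * (x ^ (-s.re - 1 / 2) + E x ^ 2 * x ^ (-(s.re + 3 / 2))) := by
  have hamgm := abs_mul_rpow_le hx (E x) (-s.re - 1)
  rw [show -s.re - 1 + 1 / 2 = -s.re - 1 / 2 by ring,
    show -s.re - 1 - 1 / 2 = -(s.re + 3 / 2) by ring] at hamgm
  calc ‖z62Integrand E w s x‖
      = |E x| * ‖Complex.ofReal (deriv w x) * (x : ℂ) ^ (-s)
          - s * (w x : ℂ) * (x : ℂ) ^ (-s - 1)‖ := by
        rw [z62Integrand, norm_mul, norm_real, Real.norm_eq_abs]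
    _ ≤ |E x| * ((1 + ‖s‖) * x ^ (-s.re - 1)) := by
        gcongr; exact norm_ofReal_mul_cpow_sub_le hx hw' hw s
    _ = (1 + ‖s‖) * (|E x| * x ^ (-s.re - 1)) := by ring
    _ ≤ _ := by gcongr

lemma intervalIntegral_norm_z62Integrand_le {E w : ℝ → ℝ} {s : ℂ} {Y D T : ℝ}
    (hs : 1 / 2 < s.re) (hY : 1 ≤ Y) (hE : Continuous E) (hw : ContDiff ℝ 1 w)
    (hw' : ∀ x ≥ Y, |deriv w x| ≤ 1 / x) (hw1 : ∀ x, |w x| ≤ 1) (hD : 0 ≤ D)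
    (hsq : ∀ u ≥ Y, ∫ x in Y..u, E x ^ 2 ≤ D * u ^ (3 / 2 : ℝ)) (hT : Y ≤ T) :
    ∫ x in Y..T, ‖z62Integrand E w s x‖
      ≤ (1 + ‖s‖) * (1 / (s.re - 1 / 2) + D * (1 + (s.re + 3 / 2) / s.re))
        * Y ^ (1 / 2 - s.re) := by
  set σ := s.re
  have hY0 : 0 < Y := by linarith
  have hYT : Set.uIcc Y T ⊆ Set.Ici Y := Set.uIcc_of_le hT ▸ Set.Icc_subset_Ici_self
  have hrpow : ∀ r : ℝ, ContinuousOn (fun x => x ^ r) (Set.uIcc Y T) := fun r x hx =>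
    (continuousAt_rpow_const x r (Or.inl (hY0.trans_le (hYT hx)).ne')).continuousWithinAt
  have hg1 : IntervalIntegrable (fun x => x ^ (-σ - 1 / 2)) volume Y T :=
    (hrpow _).intervalIntegrable
  have hg2 : IntervalIntegrable (fun x => E x ^ 2 * x ^ (-(σ + 3 / 2))) volume Y T :=
    ((hE.pow 2).continuousOn.mul (hrpow _)).intervalIntegrable
  have hF : IntervalIntegrable (fun x => ‖z62Integrand E w s x‖) volume Y T :=
    ((continuousOn_z62Integrand s hY0 hE hw).mono hYT).norm.intervalIntegrable
  have hI1 : ∫ x in Y..T, x ^ (-σ - 1 / 2) ≤ 1 / (σ - 1 / 2) * Y ^ (1 / 2 - σ) := by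
    calc _ ≤ Y ^ (-σ - 1 / 2 + 1) / -(-σ - 1 / 2 + 1) :=
          intervalIntegral_rpow_le (by linarith) hY0 hT
      _ = 1 / (σ - 1 / 2) * Y ^ (1 / 2 - σ) := by
          rw [show -σ - 1 / 2 + 1 = 1 / 2 - σ by ring]; ring
  have hI2 : ∫ x in Y..T, E x ^ 2 * x ^ (-(σ + 3 / 2))
      ≤ D * (1 + (σ + 3 / 2) / σ) * Y ^ (1 / 2 - σ) := calc
    _ ≤ D * (1 + (σ + 3 / 2) / (σ + 3 / 2 - 3 / 2)) * Y ^ (3 / 2 - (σ + 3 / 2)) :=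
        intervalIntegral_mul_rpow_neg_le (hE.pow 2) hY0 (by linarith) (by linarith) hD hsq hT
    _ ≤ D * (1 + (σ + 3 / 2) / σ) * Y ^ (1 / 2 - σ) := by
        rw [show σ + 3 / 2 - 3 / 2 = σ by ring, show 3 / 2 - (σ + 3 / 2) = -σ by ring]
        have : 0 ≤ (σ + 3 / 2) / σ := div_nonneg (by linarith) (by linarith)
        exact mul_le_mul_of_nonneg_left (rpow_le_rpow_of_exponent_le hY (by linarith))
          (mul_nonneg hD (by linarith))
  calc ∫ x in Y..T, ‖z62Integrand E w s x‖
      ≤ ∫ x in Y..T, (1 + ‖s‖) * (x ^ (-σ - 1 / 2) + E x ^ 2 * x ^ (-(σ + 3 / 2))) :=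
        intervalIntegral.integral_mono_on hT hF ((hg1.add hg2).const_mul _) fun x hx =>
          norm_z62Integrand_le (hY0.trans_le hx.1) (hw' x hx.1) (hw1 x)
    _ = (1 + ‖s‖) * ((∫ x in Y..T, x ^ (-σ - 1 / 2))
          + ∫ x in Y..T, E x ^ 2 * x ^ (-(σ + 3 / 2))) := by
        rw [intervalIntegral.integral_const_mul, intervalIntegral.integral_add hg1 hg2]
    _ ≤ (1 + ‖s‖) * (1 / (σ - 1 / 2) * Y ^ (1 / 2 - σ)
          + D * (1 + (σ + 3 / 2) / σ) * Y ^ (1 / 2 - σ)) := by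
        gcongr
    _ = _ := by ring

/-- Estimation of `Z₆₂(s)`: if `E` has mean square `≪ X log^B X` and `w` is `C¹` with
`|w| ≤ 1`, `|w'| ≤ 1/x`, then `∫_Y^∞ E(x)(w'(x)x^(-s) - s w(x) x^(-s-1)) dx` converges
absolutely and is `≪ (1+|s|) Y^(1/2-σ) log^C Y`. -/
theorem stmt_9 (A B σ : ℝ) (hA : 0 ≤ A) (hσ : 1 / 2 < σ) :
    ∃ K > (0 : ℝ), ∃ C : ℝ, ∀ (Y t : ℝ) (E w : ℝ → ℝ), 2 ≤ Y →
      Continuous E →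
      (∀ X ≥ (2 : ℝ), ∫ x in Set.Icc 1 X, (E x) ^ 2 ≤ A * X * (Real.log X) ^ B) →
      ContDiff ℝ 1 w → (∀ x ≥ Y, |deriv w x| ≤ 1 / x) → (∀ x, |w x| ≤ 1) →
      IntegrableOn
        (fun x : ℝ => (E x : ℂ) *
          ((Complex.ofReal (deriv w x)) * (x : ℂ) ^ (-((σ : ℂ) + t * Complex.I))
            - ((σ : ℂ) + t * Complex.I) * (w x : ℂ) * (x : ℂ) ^ (-((σ : ℂ) + t * Complex.I) - 1)))
        (Set.Ici Y) ∧
      ‖∫ x in Set.Ici Y, (E x : ℂ) *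
          ((Complex.ofReal (deriv w x)) * (x : ℂ) ^ (-((σ : ℂ) + t * Complex.I))
            - ((σ : ℂ) + t * Complex.I) * (w x : ℂ) * (x : ℂ) ^ (-((σ : ℂ) + t * Complex.I) - 1))‖
        ≤ K * (1 + ‖(σ : ℂ) + t * Complex.I‖) * Y ^ (1 / 2 - σ) * (Real.log Y) ^ C := by
  obtain ⟨M, hM0, hM⟩ := exists_log_rpow_le_mul_sqrt B
  have hD : 0 ≤ A * M := mul_nonneg hA hM0.le
  have hK : 0 < 1 / (σ - 1 / 2) + A * M * (1 + (σ + 3 / 2) / σ) := by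
    have : 0 < σ - 1 / 2 := by linarith
    have : 0 < σ := by linarith
    positivity
  refine ⟨_, hK, 0, fun Y t E w hY hE hmean hw hw' hw1 => ?_⟩
  have hsre : ((σ : ℂ) + t * I).re = σ := by simp
  obtain ⟨hint, hnorm⟩ := integrableOn_Ici_and_norm_integral_le
    (continuousOn_z62Integrand _ (by linarith) hE hw) fun T hT =>
      intervalIntegral_norm_z62Integrand_le (hsre ▸ hσ) (by linarith) hE hw hw' hw1 hD
        (intervalIntegral_sq_le_of_integral_Icc_sq_le hE hA hM hmean hY) hT
  refine ⟨hint, hnorm.trans_eq ?_⟩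
  rw [hsre, rpow_zero]
  ring
end
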